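/- Let G be a group acting on a set X and let H = G_x be a point stabilizer that is not properly contained in any of its conjugates (for all g ∈ G, H ⊆ gHg^{-1} implies H = gHg^{-1}). Let B_[H] = {y ∈ X : G_y is conjugate to H} and let O_[H] be the set of G-orbits contained in B_[H]. Then the monoid End_G(B_[H]) is isomorphic to the wreath product of monoids (N_G(H)/H) ≀ Tran(O_[H]), where Tran(O_[H]) is the full transformation monoid on O_[H]. -/

import Mathlib

/-!
Fix in every orbit of `B_[H]` a base point with stabilizer exactly `H`. An equivariant map is
determined by the images of the base points, and any choice of images fixed by `H` extends. Such
an image has stabilizer containing `H` and conjugate to `H`, hence equal to `H` since `H` is not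
properly contained in a conjugate. The points with stabilizer `H` in the orbit of a base point `y`
are the `n • y` with `n ∈ N_G(H)`, and `n` is determined modulo `H`. So an endomorphism amounts to
a self-map of the set of orbits together with a class in `N_G(H)/H` for every orbit, and
composition of endomorphisms becomes the wreath product multiplication.
-/

/-- The monoid of all `G`-equivariant transformations of `X`, as a submonoid of
`Function.End X` (composition of functions). -/
def gEnd (G X : Type*) [Group G] [MulAction G X] : Submonoid (Function.End X) where
  carrier := {f | ∀ (g : G) (x : X), f (g • x) = g • f x}
  one_mem' := fun _ _ => rfl
  mul_mem' := fun {f₁ f₂} h₁ h₂ g x => by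
    show f₁ (f₂ (g • x)) = g • f₁ (f₂ x)
    rw [h₂, h₁]

/-- The group of all bijective `G`-equivariant transformations of `X`, as a subgroup of
`Equiv.Perm X`. -/
def gAut (G X : Type*) [Group G] [MulAction G X] : Subgroup (Equiv.Perm X) where
  carrier := {f | ∀ (g : G) (x : X), f (g • x) = g • f x}
  one_mem' := fun _ _ => rfl
  mul_mem' := fun {f₁ f₂} h₁ h₂ g x => by
    show f₁ (f₂ (g • x)) = g • f₁ (f₂ x)
    rw [h₂, h₁]
  inv_mem' := fun {f} hf g x => f.injective (by
    rw [← Equiv.Perm.mul_apply, mul_inv_cancel, Equiv.Perm.one_apply, hf,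
      ← Equiv.Perm.mul_apply, mul_inv_cancel, Equiv.Perm.one_apply])

/-- The conjugate subgroup `g K g⁻¹`. -/
def conjSub {G : Type*} [Group G] (g : G) (K : Subgroup G) : Subgroup G :=
  Subgroup.map (MulAut.conj g).toMonoidHom K

/-- The set `O_[H]` of `G`-orbits of `X` whose point stabilizers are conjugate to `H`. -/
def classOrbits (G X : Type*) [Group G] [MulAction G X] (H : Subgroup G) : Set (Set X) :=
  {s | ∃ y : X, (∃ g : G, MulAction.stabilizer G y = conjSub g H) ∧ s = MulAction.orbit G y}

/-- The quotient `N_G(H)/H` of the normalizer of `H` by `H`. -/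
abbrev normQuot {G : Type*} [Group G] (H : Subgroup G) :=
  (Subgroup.normalizer (H : Set G)) ⧸ H.subgroupOf (Subgroup.normalizer (H : Set G))

/-- The wreath product of a monoid `M` with the full transformation monoid `Tran(Δ)`:
the underlying set is `M^Δ × Tran(Δ)` with multiplication
`(f, s)(f', s') = (δ ↦ f(s'(δ)) * f'(δ), s ∘ s')`. -/
def MonoidWreath (M Δ : Type*) : Type _ := (Δ → M) × Function.End Δ

instance (M Δ : Type*) [Monoid M] : Monoid (MonoidWreath M Δ) where
  mul p q := (fun δ => p.1 (q.2 δ) * q.1 δ, p.2 * q.2)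
  one := (fun _ => 1, 1)
  mul_assoc a b c := by
    refine Prod.ext ?_ rfl
    funext δ
    exact mul_assoc _ _ _
  one_mul p := by
    refine Prod.ext ?_ (one_mul _)
    funext δ
    exact one_mul _
  mul_one p := by
    refine Prod.ext ?_ (mul_one _)
    funext δ
    exact mul_one _

open MulAction

section conjSub

variable {G : Type*} [Group G]

theorem mem_conjSub {a g : G} {K : Subgroup G} : g ∈ conjSub a K ↔ a⁻¹ * g * a ∈ K := by
  constructor
  · rintro ⟨k, hk, rfl⟩
    simpa [MulAut.conj_apply, mul_assoc] using hk
  · exact fun h => ⟨a⁻¹ * g * a, h, by simp [MulAut.conj_apply, mul_assoc]⟩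

theorem conjSub_one (K : Subgroup G) : conjSub 1 K = K := by
  ext g
  simp [mem_conjSub]

theorem conjSub_mul (a b : G) (K : Subgroup G) :
    conjSub (a * b) K = conjSub a (conjSub b K) := by
  ext g
  simp only [mem_conjSub, mul_inv_rev, mul_assoc]

theorem conjSub_eq_self_iff {n : G} {K : Subgroup G} :
    conjSub n K = K ↔ n ∈ Subgroup.normalizer (K : Set G) := by
  rw [Subgroup.mem_normalizer_iff'', eq_comm, SetLike.ext_iff]
  simp only [mem_conjSub]

theorem stabilizer_smul_eq_conjSub {Y : Type*} [MulAction G Y] (g : G) (y : Y) :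
    stabilizer G (g • y) = conjSub g (stabilizer G y) :=
  stabilizer_smul_eq_stabilizer_map_conj g y

theorem eq_of_le_conjSub {H K : Subgroup G} (hH : ∀ g : G, H ≤ conjSub g H → H = conjSub g H)
    (hK : ∃ g : G, K = conjSub g H) (hle : H ≤ K) : K = H := by
  obtain ⟨g, rfl⟩ := hK
  exact (hH g hle).symm

end conjSub

theorem stabilizer_le_stabilizer_apply {G Y : Type*} [Group G] [MulAction G Y] (f : gEnd G Y)
    (z : Y) : stabilizer G z ≤ stabilizer G (f.1 z) := by
  intro g hg
  rw [mem_stabilizer_iff] at hg ⊢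
  rw [← f.2 g z, hg]

structure OrbitBasepoints (G Y : Type*) [Group G] [MulAction G Y] (H : Subgroup G) where
  point : orbitRel.Quotient G Y → Y
  mk_point : ∀ δ, (⟦point δ⟧ : orbitRel.Quotient G Y) = δ
  stabilizer_point : ∀ δ, stabilizer G (point δ) = H

namespace OrbitBasepoints

variable {G Y : Type*} [Group G] [MulAction G Y] {H : Subgroup G}

theorem nonempty (hY : ∀ z : Y, ∃ g : G, stabilizer G z = conjSub g H) :
    Nonempty (OrbitBasepoints G Y H) := by
  choose g hg using hY
  refine ⟨⟨fun δ => (g δ.out)⁻¹ • δ.out, fun δ => ?_, fun δ => ?_⟩⟩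
  · rw [orbitRel.Quotient.quotient_smul_eq]
    exact Quotient.out_eq δ
  · rw [stabilizer_smul_eq_conjSub, hg, ← conjSub_mul, inv_mul_cancel, conjSub_one]

variable (P : OrbitBasepoints G Y H)

theorem exists_smul_point (z : Y) : ∃ g : G, g • P.point ⟦z⟧ = z :=
  mem_orbit_symm.mp (Quotient.exact (P.mk_point ⟦z⟧))

noncomputable def transporter (z : Y) : G := (P.exists_smul_point z).choose

theorem transporter_smul_point (z : Y) : P.transporter z • P.point ⟦z⟧ = z :=
  (P.exists_smul_point z).choose_spec

theorem smul_point_eq_smul_point_iff {g g' : G} {δ : orbitRel.Quotient G Y} :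
    g • P.point δ = g' • P.point δ ↔ g⁻¹ * g' ∈ H := by
  calc g • P.point δ = g' • P.point δ ↔ (g⁻¹ * g') • P.point δ = P.point δ := by
        rw [mul_smul, inv_smul_eq_iff, eq_comm]
    _ ↔ g⁻¹ * g' ∈ H := by rw [← mem_stabilizer_iff, P.stabilizer_point]

theorem apply_eq_transporter_smul (f : gEnd G Y) (z : Y) :
    f.1 z = P.transporter z • f.1 (P.point ⟦z⟧) := by
  conv_lhs => rw [← P.transporter_smul_point z]
  exact f.2 _ _

theorem smul_eq_smul_of_smul_point_eq {g g' : G} {δ : orbitRel.Quotient G Y} {w : Y}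
    (hw : H ≤ stabilizer G w) (h : g • P.point δ = g' • P.point δ) : g • w = g' • w := by
  have := hw (P.smul_point_eq_smul_point_iff.mp h)
  rw [mem_stabilizer_iff, mul_smul, inv_smul_eq_iff] at this
  exact this.symm

theorem extend_mem_gEnd {w : orbitRel.Quotient G Y → Y} (hw : ∀ δ, H ≤ stabilizer G (w δ)) :
    (fun z => P.transporter z • w ⟦z⟧ : Function.End Y) ∈ gEnd G Y := by
  intro g z
  show P.transporter (g • z) • w ⟦g • z⟧ = g • P.transporter z • w ⟦z⟧
  rw [orbitRel.Quotient.quotient_smul_eq, ← mul_smul]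
  refine P.smul_eq_smul_of_smul_point_eq (δ := ⟦z⟧) (hw _) ?_
  rw [mul_smul, P.transporter_smul_point, ← orbitRel.Quotient.quotient_smul_eq (g := g),
    P.transporter_smul_point]

theorem extend_point {w : orbitRel.Quotient G Y → Y} (hw : ∀ δ, H ≤ stabilizer G (w δ))
    (δ : orbitRel.Quotient G Y) : P.transporter (P.point δ) • w ⟦P.point δ⟧ = w δ := by
  rw [P.mk_point]
  conv_rhs => rw [← one_smul G (w δ)]
  refine P.smul_eq_smul_of_smul_point_eq (δ := δ) (hw δ) ?_
  simpa only [P.mk_point, one_smul] using P.transporter_smul_point (P.point δ)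

theorem stabilizer_apply_point (hH : ∀ g : G, H ≤ conjSub g H → H = conjSub g H)
    (hY : ∀ z : Y, ∃ g : G, stabilizer G z = conjSub g H) (f : gEnd G Y)
    (δ : orbitRel.Quotient G Y) : stabilizer G (f.1 (P.point δ)) = H := by
  have hle := stabilizer_le_stabilizer_apply f (P.point δ)
  rw [P.stabilizer_point] at hle
  exact eq_of_le_conjSub hH (hY _) hle

theorem transporter_mem_normalizer {z : Y} (hz : stabilizer G z = H) :
    P.transporter z ∈ Subgroup.normalizer (H : Set G) := by
  rw [← conjSub_eq_self_iff]
  calc conjSub (P.transporter z) H = conjSub (P.transporter z) (stabilizer G (P.point ⟦z⟧)) := by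
        rw [P.stabilizer_point]
    _ = H := by rw [← stabilizer_smul_eq_conjSub, P.transporter_smul_point, hz]

noncomputable def coord {z : Y} (hz : stabilizer G z = H) : normQuot H :=
  QuotientGroup.mk ⟨P.transporter z, P.transporter_mem_normalizer hz⟩

theorem coord_congr {z z' : Y} (hz : stabilizer G z = H) (hz' : stabilizer G z' = H)
    (h : z = z') : P.coord hz = P.coord hz' := by
  subst h
  rfl

theorem coord_eq_mk_iff {z : Y} (hz : stabilizer G z = H) (n : Subgroup.normalizer (H : Set G)) :
    P.coord hz = QuotientGroup.mk n ↔ (n : G) • P.point ⟦z⟧ = z := by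
  rw [coord, QuotientGroup.eq, Subgroup.mem_subgroupOf, Subgroup.coe_mul, Subgroup.coe_inv,
    ← P.smul_point_eq_smul_point_iff, P.transporter_smul_point, eq_comm]

theorem coord_point (δ : orbitRel.Quotient G Y) (h : stabilizer G (P.point δ) = H) :
    P.coord h = 1 :=
  (P.coord_eq_mk_iff h 1).mpr (by rw [P.mk_point, OneMemClass.coe_one, one_smul])

theorem coord_eq_mk_mul_coord {z z' : Y} (hz : stabilizer G z = H) (hz' : stabilizer G z' = H)
    (n : Subgroup.normalizer (H : Set G)) (h : z' = (n : G) • z) :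
    P.coord hz' = QuotientGroup.mk n * P.coord hz := by
  refine (P.coord_eq_mk_iff hz' _).mpr ?_
  rw [h, orbitRel.Quotient.quotient_smul_eq, Subgroup.coe_mul, mul_smul, P.transporter_smul_point]

theorem eq_of_mk_eq_of_coord_eq {z z' : Y} (hz : stabilizer G z = H) (hz' : stabilizer G z' = H)
    (hmk : (⟦z⟧ : orbitRel.Quotient G Y) = ⟦z'⟧) (hc : P.coord hz = P.coord hz') : z = z' := by
  have := (P.coord_eq_mk_iff hz' _).mp hc.symm
  rwa [← hmk, P.transporter_smul_point] at this

theorem exists_coord_eq (δ : orbitRel.Quotient G Y) (q : normQuot H) :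
    ∃ (z : Y) (hz : stabilizer G z = H), ⟦z⟧ = δ ∧ P.coord hz = q := by
  induction q using QuotientGroup.induction_on with | H n => ?_
  have hmk : (⟦(n : G) • P.point δ⟧ : orbitRel.Quotient G Y) = δ := by
    rw [orbitRel.Quotient.quotient_smul_eq, P.mk_point]
  have hz : stabilizer G ((n : G) • P.point δ) = H := by
    rw [stabilizer_smul_eq_conjSub, P.stabilizer_point, conjSub_eq_self_iff]
    exact n.2
  exact ⟨_, hz, hmk, (P.coord_eq_mk_iff hz n).mpr (by rw [hmk])⟩

variable (hH : ∀ g : G, H ≤ conjSub g H → H = conjSub g H)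
  (hY : ∀ z : Y, ∃ g : G, stabilizer G z = conjSub g H)

/-- The inverse is needed because `f₁ (f₂ y) = n₂ • f₁ y'` for base points `y`, `y'` and a
transporter `n₂` of `f₂ y`, so the coordinates of a composite multiply in the order opposite to
the wreath product's. -/
noncomputable def toWreath : gEnd G Y →* MonoidWreath (normQuot H) (orbitRel.Quotient G Y) where
  toFun f :=
    (fun δ => (P.coord (P.stabilizer_apply_point hH hY f δ))⁻¹, fun δ => ⟦f.1 (P.point δ)⟧)
  map_one' := Prod.ext (funext fun δ => by simp only [P.coord_point, inv_one]; rfl)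
    (funext P.mk_point)
  map_mul' f₁ f₂ := by
    refine Prod.ext (funext fun δ => ?_) (funext fun δ => ?_)
    · show (P.coord _)⁻¹ = (P.coord _)⁻¹ * (P.coord _)⁻¹
      rw [← mul_inv_rev, inv_inj]
      exact P.coord_eq_mk_mul_coord _ _ ⟨_, P.transporter_mem_normalizer
        (P.stabilizer_apply_point hH hY f₂ δ)⟩
        (P.apply_eq_transporter_smul f₁ _)
    · show ⟦f₁.1 (f₂.1 (P.point δ))⟧ = ⟦f₁.1 (P.point ⟦f₂.1 (P.point δ)⟧)⟧
      rw [P.apply_eq_transporter_smul f₁, orbitRel.Quotient.quotient_smul_eq]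

theorem toWreath_injective : Function.Injective (P.toWreath hH hY) := by
  intro f₁ f₂ h
  have hpoint : ∀ δ, f₁.1 (P.point δ) = f₂.1 (P.point δ) := fun δ =>
    P.eq_of_mk_eq_of_coord_eq _ _ (congrFun (congrArg Prod.snd h) δ)
      (inv_injective (congrFun (congrArg Prod.fst h) δ))
  refine Subtype.ext (funext fun z => ?_)
  rw [P.apply_eq_transporter_smul f₁, P.apply_eq_transporter_smul f₂, hpoint]

theorem toWreath_surjective : Function.Surjective (P.toWreath hH hY) := by
  rintro ⟨c, s⟩
  choose w hw hmk hc using fun δ => P.exists_coord_eq (s δ) (c δ)⁻¹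
  have hw_le : ∀ δ, H ≤ stabilizer G (w δ) := fun δ => (hw δ).ge
  refine ⟨⟨_, P.extend_mem_gEnd hw_le⟩, Prod.ext (funext fun δ => ?_) (funext fun δ => ?_)⟩
  · show (P.coord _)⁻¹ = c δ
    rw [P.coord_congr _ (hw δ) (P.extend_point hw_le δ), hc, inv_inv]
  · show ⟦P.transporter (P.point δ) • w ⟦P.point δ⟧⟧ = s δ
    rw [P.extend_point hw_le, hmk]

end OrbitBasepoints

theorem nonempty_gEnd_mulEquiv_monoidWreath {G Y : Type*} [Group G] [MulAction G Y]
    {H : Subgroup G} (hH : ∀ g : G, H ≤ conjSub g H → H = conjSub g H)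
    (hY : ∀ z : Y, ∃ g : G, stabilizer G z = conjSub g H) :
    Nonempty (gEnd G Y ≃* MonoidWreath (normQuot H) (orbitRel.Quotient G Y)) :=
  (OrbitBasepoints.nonempty hY).map fun P =>
    MulEquiv.ofBijective (P.toWreath hH hY)
      ⟨P.toWreath_injective hH hY, P.toWreath_surjective hH hY⟩

def MonoidWreath.congrRight {M Δ Δ' : Type*} [Monoid M] (e : Δ ≃ Δ') :
    MonoidWreath M Δ ≃* MonoidWreath M Δ' where
  toFun p := ((fun δ => p.1 (e.symm δ), fun δ => e (p.2 (e.symm δ))) : MonoidWreath M Δ')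
  invFun p := ((fun δ => p.1 (e δ), fun δ => e.symm (p.2 (e δ))) : MonoidWreath M Δ)
  left_inv p := Prod.ext (funext fun δ => by simp) (funext fun δ => by simp)
  right_inv p := Prod.ext (funext fun δ => by simp) (funext fun δ => by simp)
  map_mul' p q := Prod.ext (funext fun δ =>
      show p.1 (q.2 (e.symm δ)) * q.1 (e.symm δ) = p.1 (e.symm (e (q.2 (e.symm δ)))) * _ by simp)
    (funext fun δ => show e (p.2 (q.2 (e.symm δ))) = e (p.2 (e.symm (e (q.2 (e.symm δ))))) by simp)

noncomputable def orbitQuotientEquivClassOrbits {G X : Type*} [Group G] [MulAction G X]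
    {H : Subgroup G} (B : SubMulAction G X)
    (hB : ∀ z : X, z ∈ B ↔ ∃ g : G, stabilizer G z = conjSub g H) :
    orbitRel.Quotient G B ≃ classOrbits G X H := by
  refine Equiv.ofBijective
    (Quotient.lift (fun b : B => ⟨orbit G (b : X), b, (hB b).mp b.2, rfl⟩) fun a b hab =>
      Subtype.ext (orbit_eq_iff.mpr (SubMulAction.mem_orbit_subMul_iff.mp hab))) ⟨?_, ?_⟩
  · rintro ⟨a⟩ ⟨b⟩ h
    exact Quotient.sound (SubMulAction.mem_orbit_subMul_iff.mpr
      (orbit_eq_iff.mp (congrArg Subtype.val h)))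
  · rintro ⟨_, y, hy, rfl⟩
    exact ⟨⟦⟨y, (hB y).mpr hy⟩⟧, rfl⟩

/-- If the point stabilizer `H = G_x` is not properly contained in any of
its conjugates, then `End_G(B_[H]) ≅ (N_G(H)/H) ≀ Tran(O_[H])`, the wreath product of the
group `N_G(H)/H` with the full transformation monoid on the set of orbits in `B_[H]`. -/
theorem stmt9 {G X : Type*} [Group G] [MulAction G X] (x : X)
    (hx : ∀ g : G, MulAction.stabilizer G x ≤ conjSub g (MulAction.stabilizer G x) →
        MulAction.stabilizer G x = conjSub g (MulAction.stabilizer G x))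
    (B : SubMulAction G X)
    (hB : ∀ z : X, z ∈ B ↔
      ∃ g : G, MulAction.stabilizer G z = conjSub g (MulAction.stabilizer G x)) :
    Nonempty ((gEnd G ↑B) ≃*
      MonoidWreath (normQuot (MulAction.stabilizer G x))
        ↑(classOrbits G X (MulAction.stabilizer G x))) := by
  have hBtype : ∀ b : B, ∃ g : G, stabilizer G b = conjSub g (stabilizer G x) := fun b => by
    rw [SubMulAction.stabilizer_of_subMul]
    exact (hB b).mp b.2
  exact (nonempty_gEnd_mulEquiv_monoidWreath hx hBtype).map
    (·.trans (MonoidWreath.congrRight (orbitQuotientEquivClassOrbits B hB)))
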